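/- Fix integers m ≥ 1 and k ≥ 1. Then m·n·H_{mn} − n·∑_{i=1}^{m} H_{mn−k·i} tends to k·(m+1)/2 as n → ∞ (along the filter atTop on ℕ, restricted to n ≥ k). -/

import Mathlib

/-!
Rewrite the expression as `∑ i ∈ [1, m], n (H_{mn} - H_{mn-ki})`. For fixed `d`, the difference
`H_{mn} - H_{mn-d}` is a sum of `d` terms lying between `1/(mn)` and `1/(mn-d+1)`, so
`n (H_{mn} - H_{mn-d}) → d/m`; the limits `k i / m` add up to `k (m+1)/2`.
-/

open Filter

/-- The `j`-th harmonic number `H_j = ∑_{i=1}^j 1/i`, as a real number. -/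
noncomputable def H (j : ℕ) : ℝ := ∑ i ∈ Finset.range j, (1 : ℝ) / (i + 1)

lemma H_sub_H_eq_sum_Ico {a b : ℕ} (hab : a ≤ b) :
    H b - H a = ∑ j ∈ Finset.Ico a b, (1 : ℝ) / (j + 1) :=
  (Finset.sum_Ico_eq_sub _ hab).symm

lemma div_le_H_sub_H_sub {b d : ℕ} (hdb : d ≤ b) : (d : ℝ) / b ≤ H b - H (b - d) := by
  rw [H_sub_H_eq_sum_Ico (Nat.sub_le b d), div_eq_mul_one_div]
  have hcard : (Finset.Ico (b - d) b).card = d := by simp [Nat.sub_sub_self hdb]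
  calc (d : ℝ) * (1 / b) = (Finset.Ico (b - d) b).card • ((1 : ℝ) / b) := by
        rw [hcard, nsmul_eq_mul]
    _ ≤ _ := by
      refine Finset.card_nsmul_le_sum _ _ _ fun j hj => ?_
      have hjb : j + 1 ≤ b := (Finset.mem_Ico.mp hj).2
      gcongr
      exact_mod_cast hjb

lemma H_sub_H_sub_le_div {b d : ℕ} (hdb : d ≤ b) :
    H b - H (b - d) ≤ (d : ℝ) / ((b - d : ℕ) + 1) := by
  rw [H_sub_H_eq_sum_Ico (Nat.sub_le b d), div_eq_mul_one_div]
  have hcard : (Finset.Ico (b - d) b).card = d := by simp [Nat.sub_sub_self hdb]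
  calc _ ≤ (Finset.Ico (b - d) b).card • ((1 : ℝ) / ((b - d : ℕ) + 1)) := by
        refine Finset.sum_le_card_nsmul _ _ _ fun j hj => ?_
        have hj : b - d ≤ j := (Finset.mem_Ico.mp hj).1
        gcongr
    _ = _ := by rw [hcard, nsmul_eq_mul]

lemma tendsto_mul_H_sub_H_sub (m d : ℕ) (hm : 0 < m) :
    Tendsto (fun n : ℕ => (n : ℝ) * (H (m * n) - H (m * n - d))) atTop (nhds ((d : ℝ) / m)) := by
  have hm' : (m : ℝ) ≠ 0 := by positivity
  have hupper : Tendsto (fun n : ℕ => (d : ℝ) / ((m : ℝ) + (1 - d) / n)) atTop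
      (nhds ((d : ℝ) / m)) := by
    refine tendsto_const_nhds.div ?_ hm'
    simpa using tendsto_const_nhds.add (tendsto_const_div_atTop_nhds_zero_nat ((1 : ℝ) - d))
  refine tendsto_of_tendsto_of_tendsto_of_le_of_le' tendsto_const_nhds hupper ?_ ?_
  all_goals
    filter_upwards [eventually_ge_atTop d, eventually_gt_atTop 0] with n hdn hn
    have hdmn : d ≤ m * n := hdn.trans (Nat.le_mul_of_pos_left n hm)
    have hn' : (0 : ℝ) < n := by exact_mod_cast hn
  · calc (d : ℝ) / m = n * (d / ↑(m * n)) := by push_cast; field_simp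
      _ ≤ _ := by gcongr; exact div_le_H_sub_H_sub hdmn
  · calc _ ≤ (n : ℝ) * (d / ((m * n - d : ℕ) + 1)) := by
          gcongr; exact H_sub_H_sub_le_div hdmn
      _ = _ := by
          rw [Nat.cast_sub hdmn]
          push_cast
          have : (0 : ℝ) < m * n - d + 1 := by
            have : (d : ℝ) ≤ m * n := by exact_mod_cast hdmn
            linarith
          field_simp
          ring

lemma sum_Icc_one_cast_mul_two (m : ℕ) : (∑ i ∈ Finset.Icc 1 m, (i : ℝ)) * 2 = m * (m + 1) := by
  induction m with
  | zero => simp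
  | succ m ih =>
    rw [Finset.sum_Icc_succ_top (by omega), add_mul, ih]
    push_cast
    ring

lemma sum_Icc_one_mul_div_self (m k : ℕ) (hm : 0 < m) :
    ∑ i ∈ Finset.Icc 1 m, ((k * i : ℕ) : ℝ) / m = k * (m + 1) / 2 := by
  have hm' : (m : ℝ) ≠ 0 := by positivity
  rw [← Finset.sum_div]
  push_cast
  rw [← Finset.mul_sum]
  field_simp
  linear_combination k * sum_Icc_one_cast_mul_two m

theorem stmt_9_general (m k : ℕ) (hm : 1 ≤ m) :
    Tendsto
      (fun n : ℕ => (m : ℝ) * n * H (m * n) - n * ∑ i ∈ Finset.Icc 1 m, H (m * n - k * i))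
      atTop (nhds ((k : ℝ) * (m + 1) / 2)) := by
  have hsum : Tendsto (fun n : ℕ => ∑ i ∈ Finset.Icc 1 m, (n : ℝ) * (H (m * n) - H (m * n - k * i)))
      atTop (nhds ((k : ℝ) * (m + 1) / 2)) := by
    rw [← sum_Icc_one_mul_div_self m k hm]
    exact tendsto_finsetSum _ fun i _ => tendsto_mul_H_sub_H_sub m (k * i) hm
  refine hsum.congr fun n => ?_
  simp only [mul_sub, Finset.sum_sub_distrib, Finset.sum_const, Nat.card_Icc, Nat.add_sub_cancel,
    nsmul_eq_mul, Finset.mul_sum]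
  ring

theorem stmt_9 (m k : ℕ) (hm : 1 ≤ m) (hk : 1 ≤ k) :
    Tendsto
      (fun n : ℕ => (m : ℝ) * n * H (m * n) - n * ∑ i ∈ Finset.Icc 1 m, H (m * n - k * i))
      atTop (nhds ((k : ℝ) * (m + 1) / 2)) :=
  stmt_9_general m k hm
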